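/- Let $f \in \mathbb{C}[[x,y]]$ with $\mathrm{ord}(f) = m$, and let $g \in \mathbb{C}[[x,y]]$. Fix $a, b \in \mathbb{C}[[x,y]]$ and set $x_a = x + \varepsilon a$, $y_b = y + \varepsilon b$ in $R = \mathbb{C}[[x,y]][\varepsilon]/(\varepsilon^2)$. Then $f + \varepsilon g \in \langle x_a, y_b \rangle^m$ (as an ideal of $R$) if and only if $g - a \cdot \partial f/\partial x - b \cdot \partial f/\partial y \in \langle x, y \rangle^m$ in $\mathbb{C}[[x,y]]$. -/

import Mathlib

set_option synthInstance.maxHeartbeats 1000000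
set_option maxHeartbeats 2000000

open MvPowerSeries TrivSqZeroExt DualNumber

noncomputable section

abbrev R2 := MvPowerSeries (Fin 2) ℂ

def Mxy : Ideal R2 := Ideal.span {MvPowerSeries.X 0, MvPowerSeries.X 1}

/-- Formal partial derivative of a power series in two variables. -/
def pd (i : Fin 2) (f : R2) : R2 :=
  fun d => (d i + 1 : ℂ) * MvPowerSeries.coeff (R := ℂ) (d + Finsupp.single i 1) f

/-- The element `x + ε a` of the dual numbers over `ℂ[[x,y]]`. -/
def Xa (a : R2) : DualNumber R2 := inl (MvPowerSeries.X 0) + eps * inl a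

/-- The element `y + ε b` of the dual numbers over `ℂ[[x,y]]`. -/
def Yb (b : R2) : DualNumber R2 := inl (MvPowerSeries.X 1) + eps * inl b

/-- The `n`-th term of the expansion of `f (x + ε a, y + ε b)`. -/
def termD (a b f : R2) (n : Fin 2 →₀ ℕ) : DualNumber R2 :=
  inl (MvPowerSeries.C (σ := Fin 2) (R := ℂ) (MvPowerSeries.coeff (R := ℂ) n f)) *
    (Xa a ^ (n 0) * Yb b ^ (n 1))

/-- Substitution `f (x + ε a, y + ε b)`, defined coefficientwise: each coefficient of
each component only receives contributions from finitely many terms of the expansion. -/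
def substDual (a b f : R2) : DualNumber R2 :=
  TrivSqZeroExt.inl (R := R2) (M := R2) ((fun d => MvPowerSeries.coeff (R := ℂ) d
        (fst (∑ n ∈ Finset.Iic (d + Finsupp.single 0 1 + Finsupp.single 1 1),
          termD a b f n)) : R2)) +
  TrivSqZeroExt.inr (R := R2) (M := R2) ((fun d => MvPowerSeries.coeff (R := ℂ) d
        (snd (∑ n ∈ Finset.Iic (d + Finsupp.single 0 1 + Finsupp.single 1 1),
          termD a b f n)) : R2))

/-! The derivation `D = a ∂/∂x + b ∂/∂y` gives the ring automorphism `u + εv ↦ u + ε(v - D u)`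
of `ℂ[[x,y]][ε]` (multiplicativity is the Leibniz rule). It sends `x + εa, y + εb` to `x, y`, hence
`⟨x_a, y_b⟩^m` onto the extension of `⟨x,y⟩^m`, whose elements are the `u + εv` with
`u, v ∈ ⟨x,y⟩^m`; and it sends `f + εg` to `f + ε(g - D f)`. -/

theorem pd_eq_pderiv (i : Fin 2) : pd i = pderiv ℂ i := by
  funext f
  ext d
  rw [coeff_pderiv, mul_comm]
  rfl

namespace DualNumber

variable {R A : Type*} [CommSemiring R] [CommRing A] [Algebra R A]

def twistEquiv (D : Derivation R A A) : A[ε] ≃+* A[ε] where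
  toFun x := inl x.fst + inr (x.snd - D x.fst)
  invFun x := inl x.fst + inr (x.snd + D x.fst)
  left_inv x := by ext <;> simp
  right_inv x := by ext <;> simp
  map_mul' x y := by
    ext
    · simp
    · simp only [fst_mul, DualNumber.snd_mul, fst_add, snd_add, fst_inl, snd_inl, fst_inr, snd_inr,
        Derivation.leibniz, smul_eq_mul]
      ring
  map_add' x y := by
    ext
    · simp
    · simp only [fst_add, snd_add, snd_inl, snd_inr, map_add]
      ring

@[simp] theorem fst_twistEquiv (D : Derivation R A A) (x : A[ε]) :
    (twistEquiv D x).fst = x.fst := by simp [twistEquiv]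

@[simp] theorem snd_twistEquiv (D : Derivation R A A) (x : A[ε]) :
    (twistEquiv D x).snd = x.snd - D x.fst := by simp [twistEquiv]

theorem mem_map_algebraMap_iff {J : Ideal A} {x : A[ε]} :
    x ∈ J.map (algebraMap A A[ε]) ↔ x.fst ∈ J ∧ x.snd ∈ J := by
  constructor
  · intro h
    induction h using Submodule.span_induction with
    | mem x hx =>
      obtain ⟨u, hu, rfl⟩ := hx
      simp only [algebraMap_eq_inl, fst_inl, snd_inl]
      exact ⟨hu, J.zero_mem⟩
    | zero => simp
    | add x y _ _ hx hy => exact ⟨add_mem hx.1 hy.1, add_mem hx.2 hy.2⟩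
    | smul r x _ hx =>
      simp only [smul_eq_mul, fst_mul, DualNumber.snd_mul]
      exact ⟨J.mul_mem_left _ hx.1, add_mem (J.mul_mem_left _ hx.2) (J.mul_mem_left _ hx.1)⟩
  · rintro ⟨h1, h2⟩
    rw [← inl_fst_add_inr_snd_eq x, inr_eq_smul_eps, Algebra.smul_def, ← algebraMap_eq_inl]
    exact add_mem (Ideal.mem_map_of_mem _ h1) (Ideal.mul_mem_right _ _ (Ideal.mem_map_of_mem _ h2))

end DualNumber

def derivAlong (a b : R2) : Derivation ℂ R2 R2 := a • pderiv ℂ 0 + b • pderiv ℂ 1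

theorem derivAlong_apply (a b f : R2) : derivAlong a b f = a * pd 0 f + b * pd 1 f := by
  simp [derivAlong, pd_eq_pderiv]

theorem map_twistEquiv_span_Xa_Yb (a b : R2) :
    (Ideal.span {Xa a, Yb b}).map (twistEquiv (derivAlong a b)) =
      Mxy.map (algebraMap R2 R2[ε]) := by
  have hXa : twistEquiv (derivAlong a b) (Xa a) = algebraMap R2 R2[ε] (X 0) := by
    ext <;> simp [Xa, derivAlong, algebraMap_eq_inl]
  have hYb : twistEquiv (derivAlong a b) (Yb b) = algebraMap R2 R2[ε] (X 1) := by
    ext <;> simp [Yb, derivAlong, algebraMap_eq_inl]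
  rw [Mxy, Ideal.map_span, Ideal.map_span, Set.image_pair, Set.image_pair, hXa, hYb]

theorem equimultiple_iff_general (m : ℕ) (f g a b : R2)
    (hf : f ∈ Mxy ^ m) :
    (TrivSqZeroExt.inl f + eps * TrivSqZeroExt.inl g : DualNumber R2)
        ∈ Ideal.span {Xa a, Yb b} ^ m
      ↔ g - a * pd 0 f - b * pd 1 f ∈ Mxy ^ m := by
  rw [← Ideal.apply_mem_of_equiv_iff (f := twistEquiv (derivAlong a b)), Ideal.map_pow,
    map_twistEquiv_span_Xa_Yb, ← Ideal.map_pow, mem_map_algebraMap_iff]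
  simp only [fst_twistEquiv, snd_twistEquiv]
  simp [derivAlong_apply, hf, sub_sub]

/-- Equimultiplicity criterion along a given section: `f + ε g ∈ ⟨x + ε a, y + ε b⟩^m`
iff `g - a ∂f/∂x - b ∂f/∂y ∈ ⟨x,y⟩^m`. -/
theorem equimultiple_iff (m : ℕ) (f g a b : R2)
    (hf : f ∈ Mxy ^ m) (hf' : f ∉ Mxy ^ (m + 1)) :
    (TrivSqZeroExt.inl f + eps * TrivSqZeroExt.inl g : DualNumber R2)
        ∈ Ideal.span {Xa a, Yb b} ^ m
      ↔ g - a * pd 0 f - b * pd 1 f ∈ Mxy ^ m :=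
  equimultiple_iff_general m f g a b hf

end
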